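/- arXiv:math/0208010 — 2 statements merged into one kernel-verified Lean document; each statement's English description precedes it below -/
import Mathlib

section
/- In ℍ with metric ds² = 4dξ² + ξ⁶dθ², the distance between any two points (θ₀,ξ₀) and (θ₁,ξ₁) is at most 2ξ₀ + 2ξ₁; consequently the metric completion of ℍ adds exactly one point corresponding to the entire line ξ = 0, i.e. any two sequences (θⱼ,ξⱼ), (θⱼ',ξⱼ') with ξⱼ → 0 and ξⱼ' → 0 are equivalent Cauchy sequences. -/
/-
Join the two points by the `C¹` path `t ↦ (θ₀ + t (θ₁ - θ₀), ξ₀ (1 - t)ⁿ + ξ₁ tⁿ)`. Since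
`√(4ξ'² + ξ⁶θ'²) ≤ 2|ξ'| + ξ³|θ'|`, its length is at most `2 ∫|ξ'| + |θ₁ - θ₀| ∫ξ³`. The first
term is at most `2ξ₀ + 2ξ₁` for every `n`, while for large `n` the height stays near `0` on most
of `[0, 1]`, so `∫ξ³ ≤ (ξ₀ + ξ₁)² ∫ξ = (ξ₀ + ξ₁)³ / (n + 1)` tends to `0`. The completion claim
then follows by squeezing `Hdist` between `0` and `2ξⱼ + 2ξⱼ'`.
-/

open Set Filter

/-- Length of a smooth path `x ↦ (θ(x), ξ(x))` in the upper half-plane model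
`ℍ = {(θ,ξ) : ξ > 0}` with metric `ds² = 4dξ² + ξ⁶dθ²`. -/
noncomputable def Hlen (γ : ℝ → ℝ × ℝ) (a b : ℝ) : ℝ :=
  ∫ x in a..b,
    Real.sqrt (4 * (deriv (fun t => (γ t).2) x) ^ 2 +
      ((γ x).2) ^ 6 * (deriv (fun t => (γ t).1) x) ^ 2)

/-- The length-metric distance in `ℍ`: infimum of lengths of `C¹` paths staying in `ξ > 0`. -/
noncomputable def Hdist (p q : ℝ × ℝ) : ℝ :=
  sInf { L : ℝ | ∃ γ : ℝ → ℝ × ℝ, ContDiff ℝ 1 γ ∧ γ 0 = p ∧ γ 1 = q ∧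
    (∀ t ∈ Set.Icc (0:ℝ) 1, 0 < (γ t).2) ∧ L = Hlen γ 0 1 }

open Topology intervalIntegral

lemma Hlen_nonneg (γ : ℝ → ℝ × ℝ) {a b : ℝ} (hab : a ≤ b) : 0 ≤ Hlen γ a b :=
  integral_nonneg hab fun _ _ => Real.sqrt_nonneg _

lemma bddBelow_Hdist_set (p q : ℝ × ℝ) :
    BddBelow { L : ℝ | ∃ γ : ℝ → ℝ × ℝ, ContDiff ℝ 1 γ ∧ γ 0 = p ∧ γ 1 = q ∧
      (∀ t ∈ Icc (0:ℝ) 1, 0 < (γ t).2) ∧ L = Hlen γ 0 1 } := by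
  refine ⟨0, ?_⟩
  rintro _ ⟨γ, -, -, -, -, rfl⟩
  exact Hlen_nonneg γ zero_le_one

lemma Hdist_nonneg (p q : ℝ × ℝ) : 0 ≤ Hdist p q :=
  Real.sInf_nonneg fun _ ⟨γ, _, _, _, _, hL⟩ => hL ▸ Hlen_nonneg γ zero_le_one

lemma Hdist_le_Hlen {p q : ℝ × ℝ} {γ : ℝ → ℝ × ℝ} (hγ : ContDiff ℝ 1 γ) (h0 : γ 0 = p)
    (h1 : γ 1 = q) (hpos : ∀ t ∈ Icc (0:ℝ) 1, 0 < (γ t).2) : Hdist p q ≤ Hlen γ 0 1 :=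
  csInf_le (bddBelow_Hdist_set p q) ⟨γ, hγ, h0, h1, hpos, rfl⟩

lemma sqrt_four_mul_sq_add_le {u v w : ℝ} (hv : 0 ≤ v) :
    √(4 * u ^ 2 + v ^ 6 * w ^ 2) ≤ 2 * |u| + v ^ 3 * |w| := by
  refine Real.sqrt_le_iff.mpr ⟨by positivity, ?_⟩
  rw [← sq_abs u, ← sq_abs w]
  have : 0 ≤ |u| * (v ^ 3 * |w|) := by positivity
  nlinarith

lemma Hlen_le_integral {θ ξ : ℝ → ℝ} (hθ : ContDiff ℝ 1 θ) (hξ : ContDiff ℝ 1 ξ) {a b : ℝ}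
    (hab : a ≤ b) (hξ_nonneg : ∀ t ∈ Icc a b, 0 ≤ ξ t) :
    Hlen (fun t => (θ t, ξ t)) a b ≤ ∫ t in a..b, (2 * |deriv ξ t| + ξ t ^ 3 * |deriv θ t|) := by
  have hθ' := hθ.continuous_deriv le_rfl
  have hξ' := hξ.continuous_deriv le_rfl
  have hξc := hξ.continuous
  refine integral_mono_on hab (Continuous.intervalIntegrable (by fun_prop) _ _)
    (Continuous.intervalIntegrable (by fun_prop) _ _) fun t ht => ?_
  exact sqrt_four_mul_sq_add_le (hξ_nonneg t ht)

def dipHeight (ξ₀ ξ₁ : ℝ) (n : ℕ) (t : ℝ) : ℝ := ξ₀ * (1 - t) ^ n + ξ₁ * t ^ n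

section dipHeight

variable {ξ₀ ξ₁ : ℝ} {n : ℕ}

lemma contDiff_dipHeight : ContDiff ℝ 1 (dipHeight ξ₀ ξ₁ n) := by
  unfold dipHeight; fun_prop

lemma dipHeight_nonneg (hξ₀ : 0 ≤ ξ₀) (hξ₁ : 0 ≤ ξ₁) {t : ℝ} (ht : t ∈ Icc (0:ℝ) 1) :
    0 ≤ dipHeight ξ₀ ξ₁ n t := by
  obtain ⟨ht0, ht1⟩ := ht
  have := sub_nonneg.2 ht1
  unfold dipHeight
  positivity

lemma dipHeight_pos (hξ₀ : 0 < ξ₀) (hξ₁ : 0 < ξ₁) {t : ℝ} (ht : t ∈ Icc (0:ℝ) 1) :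
    0 < dipHeight ξ₀ ξ₁ n t := by
  obtain ⟨ht0, ht1⟩ := ht
  rcases ht1.lt_or_eq with ht1 | rfl
  · have := sub_pos.2 ht1
    unfold dipHeight
    positivity
  · simp only [dipHeight, sub_self, one_pow, mul_one]
    positivity

lemma dipHeight_le (hξ₀ : 0 ≤ ξ₀) (hξ₁ : 0 ≤ ξ₁) {t : ℝ} (ht : t ∈ Icc (0:ℝ) 1) :
    dipHeight ξ₀ ξ₁ n t ≤ ξ₀ + ξ₁ := by
  obtain ⟨ht0, ht1⟩ := ht
  have h0 : (1 - t) ^ n ≤ 1 := pow_le_one₀ (by linarith) (by linarith)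
  have h1 : t ^ n ≤ 1 := pow_le_one₀ ht0 ht1
  unfold dipHeight
  nlinarith [mul_le_mul_of_nonneg_left h0 hξ₀, mul_le_mul_of_nonneg_left h1 hξ₁]

lemma hasDerivAt_dipHeight (t : ℝ) :
    HasDerivAt (dipHeight ξ₀ ξ₁ n) (n * (ξ₁ * t ^ (n - 1) - ξ₀ * (1 - t) ^ (n - 1))) t := by
  have h := ((((hasDerivAt_id t).const_sub 1).pow n).const_mul ξ₀).add
    ((hasDerivAt_pow n t).const_mul ξ₁)
  exact h.congr_deriv (by simp only [id]; ring)

lemma integral_dipHeight :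
    ∫ t in (0:ℝ)..1, dipHeight ξ₀ ξ₁ n t = (ξ₀ + ξ₁) / (n + 1) := by
  unfold dipHeight
  rw [integral_add (Continuous.intervalIntegrable (by fun_prop) _ _)
    (Continuous.intervalIntegrable (by fun_prop) _ _), integral_const_mul, integral_const_mul,
    integral_comp_sub_left (fun t => t ^ n), integral_pow]
  norm_num
  ring

lemma integral_abs_deriv_dipHeight_le (hξ₀ : 0 ≤ ξ₀) (hξ₁ : 0 ≤ ξ₁) (hn : n ≠ 0) :
    ∫ t in (0:ℝ)..1, |deriv (dipHeight ξ₀ ξ₁ n) t| ≤ ξ₀ + ξ₁ := by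
  have hderiv : Continuous (deriv (dipHeight ξ₀ ξ₁ n)) :=
    contDiff_dipHeight.continuous_deriv le_rfl
  have hbound : ∀ t ∈ Icc (0:ℝ) 1, |deriv (dipHeight ξ₀ ξ₁ n) t| ≤
      n * (ξ₁ * t ^ (n - 1) + ξ₀ * (1 - t) ^ (n - 1)) := by
    rintro t ⟨ht0, ht1⟩
    have := sub_nonneg.2 ht1
    have ha : 0 ≤ (n:ℝ) * (ξ₁ * t ^ (n - 1)) := by positivity
    have hb : 0 ≤ (n:ℝ) * (ξ₀ * (1 - t) ^ (n - 1)) := by positivity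
    rw [(hasDerivAt_dipHeight t).deriv, abs_le]
    constructor <;> linarith
  -- the bound is the derivative of `ξ₁ t ^ n - ξ₀ (1 - t) ^ n`
  have hftc :
      ∫ t in (0:ℝ)..1, (n * (ξ₁ * t ^ (n - 1) + ξ₀ * (1 - t) ^ (n - 1)) : ℝ) = ξ₀ + ξ₁ := by
    rw [integral_eq_sub_of_hasDerivAt (f := fun t => ξ₁ * t ^ n - ξ₀ * (1 - t) ^ n)]
    · simp [hn, add_comm]
    · intro t _
      have h := ((hasDerivAt_pow n t).const_mul ξ₁).sub
        ((((hasDerivAt_id t).const_sub 1).pow n).const_mul ξ₀)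
      exact h.congr_deriv (by simp only [id]; ring)
    · exact Continuous.intervalIntegrable (by fun_prop) _ _
  exact hftc ▸ integral_mono_on zero_le_one (hderiv.abs.intervalIntegrable _ _)
    (Continuous.intervalIntegrable (by fun_prop) _ _) hbound

end dipHeight

lemma Hlen_dipPath_le (θ₀ θ₁ : ℝ) {ξ₀ ξ₁ : ℝ} (hξ₀ : 0 ≤ ξ₀) (hξ₁ : 0 ≤ ξ₁) {n : ℕ} (hn : n ≠ 0) :
    Hlen (fun t => (θ₀ + t * (θ₁ - θ₀), dipHeight ξ₀ ξ₁ n t)) 0 1 ≤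
      2 * ξ₀ + 2 * ξ₁ + (ξ₀ + ξ₁) ^ 3 * |θ₁ - θ₀| / (n + 1) := by
  set ξ := dipHeight ξ₀ ξ₁ n
  have hθ : ContDiff ℝ 1 fun t : ℝ => θ₀ + t * (θ₁ - θ₀) := by fun_prop
  have hderiv_θ (t : ℝ) : deriv (fun t : ℝ => θ₀ + t * (θ₁ - θ₀)) t = θ₁ - θ₀ := by simp
  have hξ_cont : Continuous ξ := contDiff_dipHeight.continuous
  have hξ'_cont : Continuous (deriv ξ) := contDiff_dipHeight.continuous_deriv le_rfl
  have hcube : ∀ t ∈ Icc (0:ℝ) 1,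
      2 * |deriv ξ t| + ξ t ^ 3 * |deriv (fun t : ℝ => θ₀ + t * (θ₁ - θ₀)) t| ≤
        2 * |deriv ξ t| + (ξ₀ + ξ₁) ^ 2 * |θ₁ - θ₀| * ξ t := by
    intro t ht
    have h0 := dipHeight_nonneg (n := n) hξ₀ hξ₁ ht
    have h1 := dipHeight_le (n := n) hξ₀ hξ₁ ht
    rw [hderiv_θ]
    have : ξ t ^ 3 ≤ (ξ₀ + ξ₁) ^ 2 * ξ t := by
      rw [pow_succ]
      exact mul_le_mul_of_nonneg_right (pow_le_pow_left₀ h0 h1 2) h0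
    nlinarith [abs_nonneg (θ₁ - θ₀)]
  calc Hlen (fun t => (θ₀ + t * (θ₁ - θ₀), ξ t)) 0 1
      ≤ ∫ t in (0:ℝ)..1,
          (2 * |deriv ξ t| + ξ t ^ 3 * |deriv (fun t : ℝ => θ₀ + t * (θ₁ - θ₀)) t|) :=
        Hlen_le_integral hθ contDiff_dipHeight zero_le_one fun t ht => dipHeight_nonneg hξ₀ hξ₁ ht
    _ ≤ ∫ t in (0:ℝ)..1, (2 * |deriv ξ t| + (ξ₀ + ξ₁) ^ 2 * |θ₁ - θ₀| * ξ t) :=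
        integral_mono_on zero_le_one (Continuous.intervalIntegrable (by fun_prop) _ _)
          (Continuous.intervalIntegrable (by fun_prop) _ _) hcube
    _ = 2 * (∫ t in (0:ℝ)..1, |deriv ξ t|) +
          (ξ₀ + ξ₁) ^ 2 * |θ₁ - θ₀| * ∫ t in (0:ℝ)..1, ξ t := by
        rw [integral_add (Continuous.intervalIntegrable (by fun_prop) _ _)
          (Continuous.intervalIntegrable (by fun_prop) _ _), integral_const_mul, integral_const_mul]
    _ ≤ 2 * (ξ₀ + ξ₁) + (ξ₀ + ξ₁) ^ 2 * |θ₁ - θ₀| * ((ξ₀ + ξ₁) / (n + 1)) := by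
        rw [integral_dipHeight]
        gcongr
        exact integral_abs_deriv_dipHeight_le hξ₀ hξ₁ hn
    _ = 2 * ξ₀ + 2 * ξ₁ + (ξ₀ + ξ₁) ^ 3 * |θ₁ - θ₀| / (n + 1) := by ring

lemma Hdist_le_add_div {θ₀ ξ₀ θ₁ ξ₁ : ℝ} (hξ₀ : 0 < ξ₀) (hξ₁ : 0 < ξ₁) {n : ℕ} (hn : n ≠ 0) :
    Hdist (θ₀, ξ₀) (θ₁, ξ₁) ≤ 2 * ξ₀ + 2 * ξ₁ + (ξ₀ + ξ₁) ^ 3 * |θ₁ - θ₀| / (n + 1) := by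
  refine (Hdist_le_Hlen ?_ ?_ ?_ fun t ht => dipHeight_pos hξ₀ hξ₁ ht).trans
    (Hlen_dipPath_le θ₀ θ₁ hξ₀.le hξ₁.le hn)
  · exact (contDiff_const.add (contDiff_id.mul contDiff_const)).prodMk contDiff_dipHeight
  · simp [dipHeight, hn]
  · simp [dipHeight, hn]

lemma Hdist_le {θ₀ ξ₀ θ₁ ξ₁ : ℝ} (hξ₀ : 0 < ξ₀) (hξ₁ : 0 < ξ₁) :
    Hdist (θ₀, ξ₀) (θ₁, ξ₁) ≤ 2 * ξ₀ + 2 * ξ₁ := by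
  have hlim : Tendsto (fun n : ℕ => 2 * ξ₀ + 2 * ξ₁ + (ξ₀ + ξ₁) ^ 3 * |θ₁ - θ₀| / (n + 1))
      atTop (𝓝 (2 * ξ₀ + 2 * ξ₁)) := by
    simpa [div_eq_mul_inv] using
      tendsto_const_nhds.add
        (tendsto_one_div_add_atTop_nhds_zero_nat.const_mul ((ξ₀ + ξ₁) ^ 3 * |θ₁ - θ₀|))
  exact ge_of_tendsto hlim <| (eventually_ne_atTop 0).mono fun n hn =>
    Hdist_le_add_div hξ₀ hξ₁ hn

/-- The distance between two points of `ℍ` is at most `2ξ₀ + 2ξ₁`; consequently any two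
sequences whose heights tend to `0` are equivalent Cauchy sequences: the completion adds
a single point for the whole line `ξ = 0`. -/
theorem stmt1 :
    (∀ θ₀ ξ₀ θ₁ ξ₁ : ℝ, 0 < ξ₀ → 0 < ξ₁ →
      Hdist (θ₀, ξ₀) (θ₁, ξ₁) ≤ 2 * ξ₀ + 2 * ξ₁) ∧
    (∀ θ ξ θ' ξ' : ℕ → ℝ, (∀ j, 0 < ξ j) → (∀ j, 0 < ξ' j) →
      Tendsto ξ atTop (nhds 0) → Tendsto ξ' atTop (nhds 0) →
      Tendsto (fun j => Hdist (θ j, ξ j) (θ' j, ξ' j)) atTop (nhds 0)) := by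
  refine ⟨fun θ₀ ξ₀ θ₁ ξ₁ => Hdist_le, fun θ ξ θ' ξ' hξ hξ' hlim hlim' => ?_⟩
  refine squeeze_zero (fun j => Hdist_nonneg _ _) (fun j => Hdist_le (hξ j) (hξ' j)) ?_
  simpa using (hlim.const_mul 2).add (hlim'.const_mul 2)
end

section
/- Let γ, γ' be isometries of a metric space X admitting axes A_γ, A_{γ'} : ℝ → X (unit-speed geodesic lines equivariant under γ, γ' respectively) that diverge, meaning the map (t,s) ↦ d(A_γ(t), A_{γ'}(s)) is proper. Suppose for every sequence σᵢ ∈ X: dist(σᵢ, A_γ) → ∞ implies d(σᵢ, γσᵢ) → ∞, and likewise for γ'. Then for every M ≥ 0 the set {σ ∈ X : max(d(σ,γσ), d(σ,γ'σ)) ≤ M} is bounded. -/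
open Set Metric Filter Bornology

/-- If the axes of `γ` and `γ'` diverge and displacement grows with distance to each axis,
then the joint displacement function is proper: its sublevel sets are bounded. -/
theorem stmt17 {X : Type*} [MetricSpace X]
    (γ γ' : X → X) (hγ : Isometry γ) (hγ' : Isometry γ')
    (A A' : ℝ → X)
    (hA : ∀ s t : ℝ, dist (A s) (A t) = |s - t|)
    (hA' : ∀ s t : ℝ, dist (A' s) (A' t) = |s - t|)
    (L L' : ℝ) (hL : 0 < L) (hL' : 0 < L')
    (heq : ∀ t : ℝ, γ (A t) = A (t + L))
    (heq' : ∀ t : ℝ, γ' (A' t) = A' (t + L'))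
    (hdiv : ∀ r : ℝ, Bornology.IsBounded {p : ℝ × ℝ | dist (A p.1) (A' p.2) ≤ r})
    (hprop : ∀ σ : ℕ → X,
      Tendsto (fun i => Metric.infDist (σ i) (Set.range A)) atTop atTop →
      Tendsto (fun i => dist (σ i) (γ (σ i))) atTop atTop)
    (hprop' : ∀ σ : ℕ → X,
      Tendsto (fun i => Metric.infDist (σ i) (Set.range A')) atTop atTop →
      Tendsto (fun i => dist (σ i) (γ' (σ i))) atTop atTop) :
    ∀ M : ℝ, 0 ≤ M →
      Bornology.IsBounded {σ : X | max (dist σ (γ σ)) (dist σ (γ' σ)) ≤ M} := by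
  intro M hM
  set S : Set X := {σ : X | max (dist σ (γ σ)) (dist σ (γ' σ)) ≤ M} with hS
  -- Step 1: distance from points of S to range A is bounded
  have key : ∀ (B : Set X) (g : X → X),
      (∀ σ : ℕ → X,
        Tendsto (fun i => Metric.infDist (σ i) B) atTop atTop →
        Tendsto (fun i => dist (σ i) (g (σ i))) atTop atTop) →
      (∀ σ ∈ S, dist σ (g σ) ≤ M) →
      ∃ R : ℝ, ∀ σ ∈ S, Metric.infDist σ B ≤ R := by
    intro B g hp hle
    by_contra h
    push_neg at h
    choose σ hσS hσd using fun n : ℕ => h n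
    have htend : Tendsto (fun i => Metric.infDist (σ i) B) atTop atTop :=
      tendsto_atTop_mono (fun n => (hσd n).le) tendsto_natCast_atTop_atTop
    have := hp σ htend
    have hev := this.eventually_gt_atTop M
    rcases hev.exists with ⟨n, hn⟩
    exact absurd (hle (σ n) (hσS n)) (not_le.mpr hn)
  have hleγ : ∀ σ ∈ S, dist σ (γ σ) ≤ M := fun σ hσ =>
    le_trans (le_max_left _ _) hσ
  have hleγ' : ∀ σ ∈ S, dist σ (γ' σ) ≤ M := fun σ hσ =>
    le_trans (le_max_right _ _) hσ
  obtain ⟨R, hR⟩ := key (Set.range A) γ hprop hleγ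
  obtain ⟨R', hR'⟩ := key (Set.range A') γ' hprop' hleγ'
  -- Step 2: use divergence
  obtain ⟨C, hC⟩ := (hdiv (R + R' + 2)).subset_closedBall (0 : ℝ × ℝ)
  -- Every σ ∈ S is within R+1 of A t with |t| ≤ C
  apply (Metric.isBounded_iff_subset_closedBall (A 0)).mpr
  refine ⟨R + 1 + C, fun σ hσ => ?_⟩
  have h1 : Metric.infDist σ (Set.range A) < R + 1 :=
    lt_of_le_of_lt (hR σ hσ) (by linarith [ (hR σ hσ), Metric.infDist_nonneg (s := Set.range A) (x := σ) ] )
  have h2 : Metric.infDist σ (Set.range A') < R' + 1 := by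
    have := hR' σ hσ
    have h0 : (0:ℝ) ≤ Metric.infDist σ (Set.range A') := Metric.infDist_nonneg
    linarith
  obtain ⟨x, ⟨t, rfl⟩, hx⟩ :=
    (Metric.infDist_lt_iff (Set.range_nonempty A)).mp h1
  obtain ⟨y, ⟨s, rfl⟩, hy⟩ :=
    (Metric.infDist_lt_iff (Set.range_nonempty A')).mp h2
  have hAt : dist (A t) (A' s) ≤ R + R' + 2 := by
    have := dist_triangle (A t) σ (A' s)
    rw [dist_comm (A t) σ] at this
    linarith
  have hmem : ((t, s) : ℝ × ℝ) ∈ {p : ℝ × ℝ | dist (A p.1) (A' p.2) ≤ R + R' + 2} := hAt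
  have htC : |t| ≤ C := by
    have := hC hmem
    rw [Metric.mem_closedBall, Prod.dist_eq] at this
    have h1 : dist t (0:ℝ) ≤ C := le_trans (le_max_left _ _) this
    simpa [Real.dist_eq] using h1
  rw [Metric.mem_closedBall]
  calc dist σ (A 0) ≤ dist σ (A t) + dist (A t) (A 0) := dist_triangle _ _ _
    _ ≤ (R + 1) + |t| := by
        have := hA t 0
        rw [this]
        simp only [sub_zero]
        linarith
    _ ≤ R + 1 + C := by linarith
end
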